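/- arXiv:2511.19698 — 5 statements merged into one kernel-verified Lean document; each statement's English description precedes it below -/
import Mathlib

section
/- For every integer n ≥ 2 and every nonnegative integer k, the number of partitions of n with negative crank and exactly k parts greater than 1 equals the number of partitions of n with positive crank and exactly k+1 parts greater than 1. -/
open scoped Classical

/-- The parts of a partition, sorted in nonincreasing order, so that
`(sortedParts p).getD (i-1) 0` is the `i`-th part `λ_i` (1-indexed). -/
def sortedParts {n : ℕ} (p : n.Partition) : List ℕ :=
  p.parts.sort (· ≥ ·)

/-- The mex of a partition: the smallest positive integer that is not a part. -/
noncomputable def mex {n : ℕ} (p : n.Partition) : ℕ :=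
  sInf {m : ℕ | 0 < m ∧ m ∉ p.parts}

/-- A partition has a fixed point if `λ_i = i` for some index `i`. -/
def hasFixedPoint {n : ℕ} (p : n.Partition) : Prop :=
  ∃ i : ℕ, 0 < i ∧ i ≤ (sortedParts p).length ∧ (sortedParts p).getD (i - 1) 0 = i

/-- `ω(λ)`: the number of parts equal to 1. -/
def omegaStat {n : ℕ} (p : n.Partition) : ℕ := p.parts.count 1

/-- `μ(λ)`: the number of parts greater than `ω(λ)`. -/
def muStat {n : ℕ} (p : n.Partition) : ℕ :=
  (p.parts.filter (fun x => omegaStat p < x)).card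

/-- The crank of a partition. -/
def crank {n : ℕ} (p : n.Partition) : ℤ :=
  if omegaStat p = 0 then (p.parts.sup : ℤ) else (muStat p : ℤ) - (omegaStat p : ℤ)

/-- `β(λ)`: the number of parts greater than 1. -/
def betaStat {n : ℕ} (p : n.Partition) : ℕ :=
  (p.parts.filter (fun x => 1 < x)).card

/-- The Durfee square size: the largest `i` with `λ_i ≥ i` (0 if none). -/
noncomputable def durfee {n : ℕ} (p : n.Partition) : ℕ :=
  sSup {i : ℕ | 0 < i ∧ i ≤ (sortedParts p).length ∧ i ≤ (sortedParts p).getD (i - 1) 0}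


/-!
Encode a partition by the multiset `ν` of its parts greater than one and its number `ω` of ones.
The crank is negative iff fewer than `ω` parts of `ν` exceed `ω`, and positive iff at least
`ω + 1` of them do. Let `e` be the largest `i` such that `ν` has at least `i` parts `≥ i + 1`.
The bijection merges `ω - m` of the ones into a single new part, with `m ≤ e` the largest number
such that at most `e - m` parts of `ν` exceed `ω - m`. The result `(ρ, m)` has Durfee square
`e + 1` and the new part is its `(e + 1 - m)`-th largest part, so the inverse map recovers that
part as the `(durfeeSquare ρ - m)`-th largest part of `ρ` and splits it back into ones.
-/

open Multiset

namespace Nat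

lemma findGreatest_eq_of_antitone {P : ℕ → Prop} [DecidablePred P] (hP : Antitone P)
    {i N : ℕ} (hiN : i ≤ N) (hi : P i) (hi' : ¬ P (i + 1)) : Nat.findGreatest P N = i :=
  Nat.findGreatest_eq_iff.2
    ⟨hiN, fun _ => hi, fun _ hlt _ hj => hi' (hP (Nat.succ_le_of_lt hlt) hj)⟩

end Nat

namespace Multiset

/-- `M.conjugate i` is the `i`-th part of the conjugate partition of `M`. -/
def conjugate (M : Multiset ℕ) (i : ℕ) : ℕ := M.countP (i ≤ ·)

variable (M : Multiset ℕ)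

lemma conjugate_antitone : Antitone M.conjugate := fun i j hij => by
  simp only [conjugate, countP_eq_card_filter]
  exact card_le_card (monotone_filter_right M fun _ hj => hij.trans hj)

lemma conjugate_le_card (i : ℕ) : M.conjugate i ≤ card M := countP_le_card _ _

@[simp] lemma conjugate_zero : M.conjugate 0 = card M :=
  countP_eq_card.2 fun a _ => Nat.zero_le a

lemma conjugate_cons (a i : ℕ) :
    (a ::ₘ M).conjugate i = M.conjugate i + if i ≤ a then 1 else 0 :=
  countP_cons _ _ _

lemma conjugate_erase {s : ℕ} (hs : s ∈ M) (i : ℕ) :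
    M.conjugate i = (M.erase s).conjugate i + if i ≤ s then 1 else 0 := by
  conv_lhs => rw [← cons_erase hs]
  exact conjugate_cons _ _ _

lemma conjugate_eq_zero_of_sup_lt {i : ℕ} (h : M.sup < i) : M.conjugate i = 0 :=
  countP_eq_zero.2 fun _ ha => not_le.2 ((le_sup ha).trans_lt h)

lemma mem_of_conjugate_succ_lt {s : ℕ} (h : M.conjugate (s + 1) < M.conjugate s) : s ∈ M := by
  by_contra hs
  refine h.ne (countP_congr rfl fun x hx => ?_)
  have : x ≠ s := fun e => hs (e ▸ hx)
  simp only [eq_iff_iff]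
  omega

lemma conjugate_two_eq_card (h : ∀ a ∈ M, 1 < a) : M.conjugate 2 = card M :=
  countP_eq_card.2 h

end Multiset

namespace CrankBijection

def durfeeSquare (ρ : Multiset ℕ) : ℕ :=
  Nat.findGreatest (fun i => i ≤ ρ.conjugate i) (card ρ)

/-- The largest `i` such that an `i × (i + 1)` rectangle fits in the Young diagram of `ν`. -/
def durfeeRectangle (ν : Multiset ℕ) : ℕ :=
  Nat.findGreatest (fun i => i ≤ ν.conjugate (i + 1)) (card ν)

def keptOnes (ν : Multiset ℕ) (ω : ℕ) : ℕ :=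
  Nat.findGreatest (fun j => ν.conjugate (ω - j + 1) + j ≤ durfeeRectangle ν)
    (durfeeRectangle ν)

/-- The `(durfeeSquare ρ - w)`-th largest part of `ρ`. -/
def removedPart (ρ : Multiset ℕ) (w : ℕ) : ℕ :=
  Nat.findGreatest (fun x => durfeeSquare ρ ≤ ρ.conjugate x + w) ρ.sup

def mergeOnes (x : Multiset ℕ × ℕ) : Multiset ℕ × ℕ :=
  ((x.2 - keptOnes x.1 x.2) ::ₘ x.1, keptOnes x.1 x.2)

def splitPart (x : Multiset ℕ × ℕ) : Multiset ℕ × ℕ :=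
  (x.1.erase (removedPart x.1 x.2), removedPart x.1 x.2 + x.2)

section Durfee

variable (M : Multiset ℕ)

lemma le_durfeeSquare {i : ℕ} (h : i ≤ M.conjugate i) : i ≤ durfeeSquare M :=
  Nat.le_findGreatest (h.trans (M.conjugate_le_card i)) h

lemma durfeeSquare_le_card : durfeeSquare M ≤ card M := Nat.findGreatest_le _

lemma durfeeSquare_le_conjugate : durfeeSquare M ≤ M.conjugate (durfeeSquare M) :=
  Nat.findGreatest_spec (P := fun i => i ≤ M.conjugate i) (Nat.zero_le _) (Nat.zero_le _)

lemma conjugate_durfeeSquare_succ_le : M.conjugate (durfeeSquare M + 1) ≤ durfeeSquare M := by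
  by_contra! h
  exact (le_durfeeSquare M h).not_gt (Nat.lt_succ_self _)

lemma durfeeRectangle_le_card : durfeeRectangle M ≤ card M := Nat.findGreatest_le _

lemma durfeeRectangle_le_conjugate : durfeeRectangle M ≤ M.conjugate (durfeeRectangle M + 1) :=
  Nat.findGreatest_spec (P := fun i => i ≤ M.conjugate (i + 1)) (Nat.zero_le _) (Nat.zero_le _)

lemma conjugate_durfeeRectangle_add_two_le :
    M.conjugate (durfeeRectangle M + 2) ≤ durfeeRectangle M := by
  by_contra! h
  have hcard : durfeeRectangle M + 1 ≤ card M := h.trans_le (M.conjugate_le_card _)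
  exact (Nat.le_findGreatest (P := fun i => i ≤ M.conjugate (i + 1)) hcard h).not_gt
    (Nat.lt_succ_self _)

lemma keptOnes_le_durfeeRectangle (ω : ℕ) : keptOnes M ω ≤ durfeeRectangle M :=
  Nat.findGreatest_le _

end Durfee

section MergeOnes

variable {ν : Multiset ℕ} {ω : ℕ} (hA : ν.conjugate (ω + 1) < ω)
include hA

lemma durfeeRectangle_lt : durfeeRectangle ν < ω := by
  by_contra! h
  have := ν.conjugate_antitone (show ω + 1 ≤ durfeeRectangle ν + 1 by omega)
  have := durfeeRectangle_le_conjugate ν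
  omega

lemma conjugate_keptOnes_le :
    ν.conjugate (ω - keptOnes ν ω + 1) + keptOnes ν ω ≤ durfeeRectangle ν := by
  refine Nat.findGreatest_spec (P := fun j => ν.conjugate (ω - j + 1) + j ≤ durfeeRectangle ν)
    (Nat.zero_le _) ?_
  have := ν.conjugate_antitone (show durfeeRectangle ν + 2 ≤ ω + 1 by
    have := durfeeRectangle_lt hA; omega)
  have := conjugate_durfeeRectangle_add_two_le ν
  simp only [Nat.sub_zero, add_zero]
  omega

lemma durfeeRectangle_lt_sub_keptOnes : durfeeRectangle ν < ω - keptOnes ν ω := by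
  by_contra! h
  have := ν.conjugate_antitone (show ω - keptOnes ν ω + 1 ≤ durfeeRectangle ν + 1 by omega)
  have := durfeeRectangle_le_conjugate ν
  have := conjugate_keptOnes_le hA
  have := durfeeRectangle_lt hA
  omega

lemma durfeeRectangle_le_conjugate_sub_keptOnes :
    durfeeRectangle ν ≤ ν.conjugate (ω - keptOnes ν ω) + keptOnes ν ω := by
  rcases (keptOnes_le_durfeeRectangle ν ω).eq_or_lt with heq | hlt
  · omega
  have hnot : ¬ ν.conjugate (ω - (keptOnes ν ω + 1) + 1) + (keptOnes ν ω + 1) ≤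
      durfeeRectangle ν :=
    Nat.findGreatest_is_greatest
      (P := fun j => ν.conjugate (ω - j + 1) + j ≤ durfeeRectangle ν) (Nat.lt_succ_self _) hlt
  have : ω - (keptOnes ν ω + 1) + 1 = ω - keptOnes ν ω := by
    have := durfeeRectangle_lt hA
    omega
  rw [this] at hnot
  omega

lemma le_conjugate_cons_keptOnes :
    keptOnes ν ω + 1 ≤ ((ω - keptOnes ν ω) ::ₘ ν).conjugate (keptOnes ν ω + 1) := by
  have := durfeeRectangle_lt_sub_keptOnes hA
  have hle := keptOnes_le_durfeeRectangle ν ω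
  have := ν.conjugate_antitone (show keptOnes ν ω + 1 ≤ durfeeRectangle ν + 1 by omega)
  have := durfeeRectangle_le_conjugate ν
  rw [conjugate_cons, if_pos (by omega)]
  omega

lemma durfeeSquare_cons_sub_keptOnes :
    durfeeSquare ((ω - keptOnes ν ω) ::ₘ ν) = durfeeRectangle ν + 1 := by
  have := durfeeRectangle_lt_sub_keptOnes hA
  refine Nat.findGreatest_eq_of_antitone
    (fun a b hab hb => le_trans hab (hb.trans (conjugate_antitone _ hab))) ?_ ?_ ?_
  · simpa using durfeeRectangle_le_card ν
  · have := durfeeRectangle_le_conjugate ν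
    rw [conjugate_cons, if_pos (by omega)]
    omega
  · have := conjugate_durfeeRectangle_add_two_le ν
    rw [show durfeeRectangle ν + 1 + 1 = durfeeRectangle ν + 2 from rfl, conjugate_cons]
    split <;> omega

lemma removedPart_cons_sub_keptOnes :
    removedPart ((ω - keptOnes ν ω) ::ₘ ν) (keptOnes ν ω) = ω - keptOnes ν ω := by
  have := durfeeRectangle_lt_sub_keptOnes hA
  refine Nat.findGreatest_eq_of_antitone
    (fun _ _ hab hb => hb.trans (Nat.add_le_add_right (conjugate_antitone _ hab) _)) ?_ ?_ ?_
  · exact le_sup (mem_cons_self _ _)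
  · have := durfeeRectangle_le_conjugate_sub_keptOnes hA
    rw [durfeeSquare_cons_sub_keptOnes hA, conjugate_cons, if_pos le_rfl]
    omega
  · have := conjugate_keptOnes_le hA
    rw [durfeeSquare_cons_sub_keptOnes hA, conjugate_cons, if_neg (by omega)]
    omega

lemma splitPart_mergeOnes : splitPart (mergeOnes (ν, ω)) = (ν, ω) := by
  have := durfeeRectangle_lt hA
  have := keptOnes_le_durfeeRectangle ν ω
  simp only [mergeOnes, splitPart, removedPart_cons_sub_keptOnes hA, erase_cons_head,
    Nat.sub_add_cancel (show keptOnes ν ω ≤ ω by omega)]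

end MergeOnes

lemma durfeeSquare_le_conjugate_removedPart (ρ : Multiset ℕ) (w : ℕ) :
    durfeeSquare ρ ≤ ρ.conjugate (removedPart ρ w) + w :=
  Nat.findGreatest_spec (P := fun x => durfeeSquare ρ ≤ ρ.conjugate x + w) (Nat.zero_le _)
    (by simpa using (durfeeSquare_le_card ρ).trans (Nat.le_add_right _ w))

section SplitPart

variable {ρ : Multiset ℕ} {w : ℕ} (hB : w + 1 ≤ ρ.conjugate (w + 1))
include hB

lemma lt_durfeeSquare : w < durfeeSquare ρ := le_durfeeSquare ρ hB

lemma conjugate_removedPart_succ_lt :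
    ρ.conjugate (removedPart ρ w + 1) + w < durfeeSquare ρ := by
  have hle : removedPart ρ w ≤ ρ.sup := Nat.findGreatest_le _
  rcases hle.lt_or_eq with hlt | heq
  · exact not_le.1 (Nat.findGreatest_is_greatest
      (P := fun x => durfeeSquare ρ ≤ ρ.conjugate x + w) (Nat.lt_succ_self _) hlt)
  · rw [heq, ρ.conjugate_eq_zero_of_sup_lt (Nat.lt_succ_self _), zero_add]
    exact lt_durfeeSquare hB

lemma removedPart_mem : removedPart ρ w ∈ ρ :=
  ρ.mem_of_conjugate_succ_lt <| by
    have := durfeeSquare_le_conjugate_removedPart ρ w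
    have := conjugate_removedPart_succ_lt hB
    omega

lemma durfeeSquare_le_removedPart : durfeeSquare ρ ≤ removedPart ρ w := by
  by_contra! h
  have := ρ.conjugate_antitone (show removedPart ρ w + 1 ≤ durfeeSquare ρ by omega)
  have := durfeeSquare_le_conjugate ρ
  have := conjugate_removedPart_succ_lt hB
  omega

lemma conjugate_erase_removedPart_lt :
    (ρ.erase (removedPart ρ w)).conjugate (removedPart ρ w + w + 1) < removedPart ρ w + w := by
  have := ρ.conjugate_erase (removedPart_mem hB) (removedPart ρ w + w + 1)
  have := ρ.conjugate_antitone (show removedPart ρ w + 1 ≤ removedPart ρ w + w + 1 by omega)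
  have := conjugate_removedPart_succ_lt hB
  have := durfeeSquare_le_removedPart hB
  split at * <;> omega

lemma durfeeRectangle_erase_removedPart :
    durfeeRectangle (ρ.erase (removedPart ρ w)) = durfeeSquare ρ - 1 := by
  have hmem := removedPart_mem hB
  have := lt_durfeeSquare hB
  have := durfeeSquare_le_removedPart hB
  refine Nat.findGreatest_eq_of_antitone
    (fun a b hab hb => le_trans hab (hb.trans (conjugate_antitone _ (by omega)))) ?_ ?_ ?_
  · rw [card_erase_of_mem hmem]
    exact Nat.sub_le_sub_right (durfeeSquare_le_card ρ) 1
  · have := ρ.conjugate_erase hmem (durfeeSquare ρ)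
    have := durfeeSquare_le_conjugate ρ
    rw [Nat.sub_add_cancel (by omega)]
    split at * <;> omega
  · have herase := ρ.conjugate_erase hmem (durfeeSquare ρ + 1)
    have := conjugate_durfeeSquare_succ_le ρ
    have hsucc := conjugate_removedPart_succ_lt hB
    rw [Nat.sub_add_cancel (by omega)]
    split at herase
    · omega
    · rw [show removedPart ρ w = durfeeSquare ρ by omega] at hsucc
      omega

lemma keptOnes_erase_removedPart :
    keptOnes (ρ.erase (removedPart ρ w)) (removedPart ρ w + w) = w := by
  have hmem := removedPart_mem hB
  have := lt_durfeeSquare hB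
  have := durfeeSquare_le_removedPart hB
  have := durfeeSquare_le_conjugate_removedPart ρ w
  have := conjugate_removedPart_succ_lt hB
  rw [keptOnes, durfeeRectangle_erase_removedPart hB]
  refine Nat.findGreatest_eq_of_antitone (fun a b hab hb => ?_) (by omega) ?_ ?_
  · have := conjugate_antitone (ρ.erase (removedPart ρ w))
      (show removedPart ρ w + w - b + 1 ≤ removedPart ρ w + w - a + 1 by omega)
    omega
  · have := ρ.conjugate_erase hmem (removedPart ρ w + 1)
    rw [show removedPart ρ w + w - w + 1 = removedPart ρ w + 1 by omega]
    split at * <;> omega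
  · have := ρ.conjugate_erase hmem (removedPart ρ w)
    rw [show removedPart ρ w + w - (w + 1) + 1 = removedPart ρ w by omega]
    split at * <;> omega

lemma mergeOnes_splitPart : mergeOnes (splitPart (ρ, w)) = (ρ, w) := by
  simp only [splitPart, mergeOnes, keptOnes_erase_removedPart hB, Nat.add_sub_cancel,
    cons_erase (removedPart_mem hB)]

end SplitPart

lemma one_lt_sub_keptOnes {ν : Multiset ℕ} {ω : ℕ} (hA : ν.conjugate (ω + 1) < ω)
    (hν : ∀ a ∈ ν, 1 < a) (hn : 2 ≤ ν.sum + ω) : 1 < ω - keptOnes ν ω := by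
  have := durfeeRectangle_lt_sub_keptOnes hA
  have := keptOnes_le_durfeeRectangle ν ω
  by_contra! h
  have hω : ω = 1 := by omega
  subst hω
  have hν0 : ν = 0 := by
    rw [← card_eq_zero, ← ν.conjugate_two_eq_card hν]
    exact Nat.lt_one_iff.1 hA
  simp [hν0] at hn

def partitionPairs (n : ℕ) : Set (Multiset ℕ × ℕ) :=
  {x | (∀ a ∈ x.1, 1 < a) ∧ x.1.sum + x.2 = n}

theorem bijOn_mergeOnes {n : ℕ} (hn : 2 ≤ n) (k : ℕ) :
    Set.BijOn mergeOnes
      (partitionPairs n ∩ {x | x.1.conjugate (x.2 + 1) < x.2 ∧ card x.1 = k})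
      (partitionPairs n ∩ {x | x.2 + 1 ≤ x.1.conjugate (x.2 + 1) ∧ card x.1 = k + 1}) := by
  refine Set.InvOn.bijOn ⟨fun ⟨_, _⟩ hx => splitPart_mergeOnes hx.2.1,
    fun ⟨_, _⟩ hx => mergeOnes_splitPart hx.2.1⟩ ?_ ?_
  · rintro ⟨ν, ω⟩ ⟨⟨hν, hsum⟩, hA, rfl⟩
    dsimp only at hν hsum hA
    have := one_lt_sub_keptOnes hA hν (hsum ▸ hn)
    refine ⟨⟨fun a ha => ?_, ?_⟩, le_conjugate_cons_keptOnes hA, card_cons _ _⟩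
    · rcases mem_cons.1 ha with rfl | ha
      exacts [this, hν a ha]
    · simp only [mergeOnes, sum_cons]
      omega
  · rintro ⟨ρ, w⟩ ⟨⟨hρ, hsum⟩, hB, hk⟩
    dsimp only at hρ hsum hB hk
    have hmem := removedPart_mem hB
    refine ⟨⟨fun a ha => hρ a (mem_of_mem_erase ha), ?_⟩,
      conjugate_erase_removedPart_lt hB, ?_⟩
    · have := sum_erase hmem
      simp only [splitPart]
      omega
    · simp only [splitPart, card_erase_of_mem hmem, hk, Nat.pred_succ]

variable {n : ℕ}

def bigParts (p : n.Partition) : Multiset ℕ := p.parts.filter (1 < ·)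

def toPair (p : n.Partition) : Multiset ℕ × ℕ := (bigParts p, omegaStat p)

lemma bigParts_add_replicate (p : n.Partition) :
    bigParts p + replicate (omegaStat p) 1 = p.parts := by
  conv_rhs => rw [← filter_add_not (1 < ·) p.parts]
  rw [bigParts, omegaStat, ← filter_eq']
  congr 1
  exact filter_congr fun a ha => by have := p.parts_pos ha; omega

lemma toPair_injective : Function.Injective (toPair (n := n)) := fun p q h => by
  simp only [toPair, Prod.mk.injEq] at h
  ext1
  rw [← bigParts_add_replicate p, ← bigParts_add_replicate q, h.1, h.2]

lemma range_toPair : Set.range (toPair (n := n)) = partitionPairs n := by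
  ext ⟨ν, ω⟩
  constructor
  · rintro ⟨p, hp⟩
    rw [← hp]
    refine ⟨fun a ha => (mem_filter.1 ha).2, ?_⟩
    have := congrArg sum (bigParts_add_replicate p)
    rwa [sum_add, sum_replicate, smul_eq_mul, mul_one, p.parts_sum] at this
  · rintro ⟨hν, hsum⟩
    have hν1 : ν.count 1 = 0 := count_eq_zero.2 fun h => (hν 1 h).false
    refine ⟨⟨ν + replicate ω 1, fun ha => ?_, ?_⟩, ?_⟩
    · rcases mem_add.1 ha with ha | ha
      exacts [zero_lt_one.trans (hν _ ha), (eq_of_mem_replicate ha).symm ▸ zero_lt_one]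
    · rwa [sum_add, sum_replicate, smul_eq_mul, mul_one]
    · have hones : (replicate ω 1).filter (1 < ·) = 0 :=
        filter_eq_nil.2 fun a ha => by rw [eq_of_mem_replicate ha]; exact lt_irrefl 1
      simp only [toPair, bigParts, omegaStat, filter_add, count_add, count_replicate_self, hν1,
        filter_eq_self.2 hν, hones, add_zero, zero_add]

lemma ncard_preimage_toPair (S : Set (Multiset ℕ × ℕ)) :
    (toPair (n := n) ⁻¹' S).ncard = (partitionPairs n ∩ S).ncard := by
  rw [← Set.ncard_image_of_injective _ toPair_injective, Set.image_preimage_eq_inter_range,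
    range_toPair, Set.inter_comm]

lemma muStat_eq_conjugate (p : n.Partition) :
    muStat p = (bigParts p).conjugate (omegaStat p + 1) := by
  rw [muStat, conjugate, bigParts, countP_filter, ← countP_eq_card_filter]
  refine countP_congr rfl fun a ha => ?_
  have := p.parts_pos ha
  have : a = 1 → omegaStat p ≠ 0 := fun h => count_ne_zero.2 (h ▸ ha)
  simp only [eq_iff_iff]
  omega

lemma crank_neg_iff (p : n.Partition) :
    crank p < 0 ↔ (bigParts p).conjugate (omegaStat p + 1) < omegaStat p := by
  rw [← muStat_eq_conjugate, crank]
  split_ifs <;> omega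

lemma crank_pos_iff (hn : n ≠ 0) (p : n.Partition) :
    0 < crank p ↔ omegaStat p + 1 ≤ (bigParts p).conjugate (omegaStat p + 1) := by
  rw [← muStat_eq_conjugate, crank]
  split_ifs with h
  · have hne : p.parts ≠ 0 := fun h0 => hn (by rw [← p.parts_sum, h0, sum_zero])
    obtain ⟨a, ha⟩ := exists_mem_of_ne_zero hne
    have hpos := p.parts_pos ha
    have : a ≤ p.parts.sup := le_sup ha
    have : 0 < muStat p :=
      (countP_pos.2 ⟨a, ha, h ▸ hpos⟩).trans_eq (countP_eq_card_filter _ _)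
    omega
  · omega

end CrankBijection

open CrankBijection

theorem neg_crank_eq_pos_crank_refined (n k : ℕ) (hn : 2 ≤ n) :
    {p : Nat.Partition n | crank p < 0 ∧ betaStat p = k}.ncard = {p : Nat.Partition n | 0 < crank p ∧ betaStat p = k + 1}.ncard := by
  have hneg : {p : n.Partition | crank p < 0 ∧ betaStat p = k} =
      toPair ⁻¹' {x | x.1.conjugate (x.2 + 1) < x.2 ∧ card x.1 = k} := by
    ext p
    simp only [Set.mem_ofPred_eq, Set.mem_preimage, crank_neg_iff, toPair]
    rfl
  have hpos : {p : n.Partition | 0 < crank p ∧ betaStat p = k + 1} =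
      toPair ⁻¹' {x | x.2 + 1 ≤ x.1.conjugate (x.2 + 1) ∧ card x.1 = k + 1} := by
    ext p
    simp only [Set.mem_ofPred_eq, Set.mem_preimage, crank_pos_iff (by omega : n ≠ 0), toPair]
    rfl
  rw [hneg, hpos, ncard_preimage_toPair, ncard_preimage_toPair]
  exact (bijOn_mergeOnes hn k).ncard_eq
end

section
/- For all positive integers n and k, the number of partitions of n with a fixed point and exactly k+1 parts greater than 1 equals the number of partitions of n with negative crank and exactly k parts greater than 1. -/
open scoped Classical

/-!
Write `λ'_j` for the number of parts `≥ j` (the conjugate partition). Then `λ_d = d` iff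
`λ'_{d+1} < d ≤ λ'_d`, and the crank is negative iff `λ'_{ω+1} < ω`. Splitting a fixed point
`d ≥ 2` into `d` ones lowers `β` by one and leaves only `λ'_{ω+d+1} ≤ λ'_{d+1} < d` parts larger
than the new number `ω + d` of ones, so the crank becomes negative. Conversely, if the crank is
negative and `β > 0`, the unique `d` with `λ'_{d+1} < d ≤ λ'_d + 1` satisfies `2 ≤ d ≤ ω`, and
merging `d` ones into a part `d` creates the fixed point `d`. Both operations preserve this `d`,
which makes them mutually inverse.
-/

theorem List.lt_countP_le_iff_le_getElem {α : Type*} [LinearOrder α] {l : List α}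
    (hl : l.Pairwise (· ≥ ·)) {j : ℕ} (hj : j < l.length) (v : α) :
    j < l.countP (v ≤ ·) ↔ v ≤ l[j] := by
  have hsplit : l = l.take j ++ l[j] :: l.drop (j + 1) := by
    rw [← List.drop_eq_getElem_cons hj, List.take_append_drop]
  have hpw := hl
  rw [hsplit, List.pairwise_append, List.pairwise_cons] at hpw
  have hcount : l.countP (v ≤ ·) = (l.take j).countP (v ≤ ·) + (if v ≤ l[j] then 1 else 0)
      + (l.drop (j + 1)).countP (v ≤ ·) := by
    conv_lhs => rw [hsplit]
    simp only [List.countP_append, List.countP_cons, decide_eq_true_eq]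
    omega
  by_cases hv : v ≤ l[j]
  · have hbefore : (l.take j).countP (v ≤ ·) = (l.take j).length :=
      List.countP_eq_length.2 fun a ha => by
        simpa using hv.trans (hpw.2.2 a ha l[j] List.mem_cons_self)
    rw [List.length_take_of_le hj.le] at hbefore
    rw [if_pos hv] at hcount
    simp only [hv, iff_true]
    omega
  · have hafter : (l.drop (j + 1)).countP (v ≤ ·) = 0 :=
      List.countP_eq_zero.2 fun b hb => by
        simpa using (hpw.2.1.1 b hb).trans_lt (not_le.1 hv)
    have := (l.take j).countP_le_length (p := (v ≤ ·))
    rw [List.length_take_of_le hj.le] at this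
    rw [if_neg hv] at hcount
    simp only [hv, iff_false]
    omega

namespace Nat.Partition

variable {n : ℕ}

/-- `p.countGE j` is the `j`-th part of the conjugate partition. -/
def countGE (p : n.Partition) (j : ℕ) : ℕ := p.parts.countP (j ≤ ·)

theorem countGE_antitone (p : n.Partition) : Antitone p.countGE := fun i j hij => by
  simp only [countGE, Multiset.countP_eq_card_filter]
  exact Multiset.card_le_card (Multiset.monotone_filter_right _ fun x hx => hij.trans hx)

theorem countGE_le_card (p : n.Partition) (j : ℕ) : p.countGE j ≤ p.parts.card :=
  Multiset.countP_le_card _ _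

theorem count_add_countGE_succ (p : n.Partition) (d : ℕ) :
    p.parts.count d + p.countGE (d + 1) = p.countGE d := by
  unfold countGE
  induction p.parts using Multiset.induction with
  | empty => simp
  | cons a s ih =>
    rw [Multiset.countP_cons, Multiset.countP_cons, Multiset.count_cons, ← ih]
    split_ifs <;> omega

theorem betaStat_eq_countGE (p : n.Partition) : betaStat p = p.countGE 2 :=
  (Multiset.countP_eq_card_filter _ _).symm

theorem crank_neg_iff (p : n.Partition) :
    crank p < 0 ↔ p.countGE (omegaStat p + 1) < omegaStat p := by
  have hmu : muStat p = p.countGE (omegaStat p + 1) := (Multiset.countP_eq_card_filter _ _).symm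
  unfold crank
  split_ifs with h
  · simp [h]
  · omega

theorem hasFixedPoint_iff (p : n.Partition) :
    hasFixedPoint p ↔ ∃ d, d ≤ p.countGE d ∧ p.countGE (d + 1) < d := by
  have hl : (sortedParts p).Pairwise (· ≥ ·) := Multiset.pairwise_sort _ _
  have hlen : (sortedParts p).length = p.parts.card := Multiset.length_sort _
  have hcount (j : ℕ) : p.countGE j = (sortedParts p).countP (j ≤ ·) := by
    rw [countGE, ← Multiset.sort_eq p.parts (· ≥ ·), Multiset.coe_countP]; rfl
  constructor
  · rintro ⟨d, hd, hdlen, hfix⟩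
    have hj : d - 1 < (sortedParts p).length := by omega
    rw [List.getD_eq_getElem _ _ hj] at hfix
    have hge := List.lt_countP_le_iff_le_getElem hl hj d
    have hlt := List.lt_countP_le_iff_le_getElem hl hj (d + 1)
    refine ⟨d, ?_, ?_⟩ <;> rw [hcount] <;> omega
  · rintro ⟨d, hd, hd'⟩
    have := p.countGE_le_card d
    have hj : d - 1 < (sortedParts p).length := by omega
    have hge := List.lt_countP_le_iff_le_getElem hl hj d
    have hlt := List.lt_countP_le_iff_le_getElem hl hj (d + 1)
    refine ⟨d, by omega, by omega, ?_⟩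
    rw [List.getD_eq_getElem _ _ hj]
    rw [hcount] at hd hd'
    omega

def splitIntoOnes (p : n.Partition) (d : ℕ) : n.Partition :=
  if h : d ∈ p.parts then
    { parts := p.parts.erase d + Multiset.replicate d 1
      parts_pos := by
        intro i hi
        rcases Multiset.mem_add.1 hi with hi | hi
        · exact p.parts_pos (Multiset.mem_of_mem_erase hi)
        · rw [Multiset.eq_of_mem_replicate hi]; exact one_pos
      parts_sum := by
        rw [Multiset.sum_add, Multiset.sum_replicate, smul_eq_mul, mul_one, add_comm,
          Multiset.sum_erase h, p.parts_sum] }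
  else p

def mergeOnes (p : n.Partition) (d : ℕ) : n.Partition :=
  if h : 0 < d ∧ Multiset.replicate d 1 ≤ p.parts then
    { parts := p.parts - Multiset.replicate d 1 + {d}
      parts_pos := by
        intro i hi
        rcases Multiset.mem_add.1 hi with hi | hi
        · exact p.parts_pos (Multiset.mem_of_le tsub_le_self hi)
        · rw [Multiset.mem_singleton.1 hi]; exact h.1
      parts_sum := by
        have := congrArg Multiset.sum (tsub_add_cancel_of_le h.2)
        rw [Multiset.sum_add, Multiset.sum_replicate, smul_eq_mul, mul_one, p.parts_sum] at this
        rw [Multiset.sum_add, Multiset.sum_singleton]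
        omega }
  else p

section SplitMerge

variable {p : n.Partition} {d : ℕ}

theorem parts_splitIntoOnes (h : d ∈ p.parts) :
    (p.splitIntoOnes d).parts = p.parts.erase d + Multiset.replicate d 1 := by
  rw [splitIntoOnes, dif_pos h]

theorem parts_mergeOnes (hd : 0 < d) (h : Multiset.replicate d 1 ≤ p.parts) :
    (p.mergeOnes d).parts = p.parts - Multiset.replicate d 1 + {d} := by
  rw [mergeOnes, dif_pos ⟨hd, h⟩]

theorem mergeOnes_splitIntoOnes (h : d ∈ p.parts) : (p.splitIntoOnes d).mergeOnes d = p := by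
  have hle : Multiset.replicate d 1 ≤ (p.splitIntoOnes d).parts := by
    rw [parts_splitIntoOnes h]; exact Multiset.le_add_left _ _
  ext1
  rw [parts_mergeOnes (p.parts_pos h) hle, parts_splitIntoOnes h, add_tsub_cancel_right,
    add_comm, Multiset.singleton_add, Multiset.cons_erase h]

theorem splitIntoOnes_mergeOnes (hd : 0 < d) (h : Multiset.replicate d 1 ≤ p.parts) :
    (p.mergeOnes d).splitIntoOnes d = p := by
  have hmem : d ∈ (p.mergeOnes d).parts := by
    rw [parts_mergeOnes hd h]; exact Multiset.mem_add.2 (Or.inr (Multiset.mem_singleton_self d))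
  ext1
  rw [parts_splitIntoOnes hmem, parts_mergeOnes hd h, add_comm (_ - _), Multiset.singleton_add,
    Multiset.erase_cons_head, tsub_add_cancel_of_le h]

theorem countGE_splitIntoOnes (h : d ∈ p.parts) {j : ℕ} (hj : 2 ≤ j) :
    (p.splitIntoOnes d).countGE j + (if j ≤ d then 1 else 0) = p.countGE j := by
  have hones : (Multiset.replicate d 1).countP (j ≤ ·) = 0 :=
    Multiset.countP_eq_zero.2 fun a ha => by rw [Multiset.eq_of_mem_replicate ha]; omega
  rw [countGE, countGE, parts_splitIntoOnes h, Multiset.countP_add, hones, add_zero,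
    ← Multiset.countP_cons, Multiset.cons_erase h]

theorem countGE_mergeOnes (hd : 0 < d) (h : Multiset.replicate d 1 ≤ p.parts) {j : ℕ}
    (hj : 2 ≤ j) : (p.mergeOnes d).countGE j = p.countGE j + (if j ≤ d then 1 else 0) := by
  conv_rhs => rw [← splitIntoOnes_mergeOnes hd h]
  refine (countGE_splitIntoOnes ?_ hj).symm
  rw [parts_mergeOnes hd h]; exact Multiset.mem_add.2 (Or.inr (Multiset.mem_singleton_self d))

theorem omegaStat_splitIntoOnes (h : d ∈ p.parts) (hd : d ≠ 1) :
    omegaStat (p.splitIntoOnes d) = omegaStat p + d := by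
  rw [omegaStat, omegaStat, parts_splitIntoOnes h, Multiset.count_add,
    Multiset.count_erase_of_ne (Ne.symm hd), Multiset.count_replicate_self]

end SplitMerge

/-- The unique `d` with `λ'_{d+1} < d ≤ λ'_d + 1`, where `λ'` is the conjugate partition
(see `pivot_eq_of`); a fixed point `λ_d = d` is the pivot. -/
def pivot (p : n.Partition) : ℕ :=
  Nat.findGreatest (fun e => e - 1 ≤ p.countGE e) (p.parts.card + 1)

section Pivot

variable {p : n.Partition} {d : ℕ}

theorem sub_one_le_countGE_pivot (p : n.Partition) : p.pivot - 1 ≤ p.countGE p.pivot :=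
  Nat.findGreatest_spec (P := fun e => e - 1 ≤ p.countGE e) (m := 0) (Nat.zero_le _)
    (Nat.zero_le _)

theorem le_pivot (h : d - 1 ≤ p.countGE d) : d ≤ p.pivot :=
  Nat.le_findGreatest (by have := p.countGE_le_card d; omega) h

theorem countGE_pivot_succ_lt (p : n.Partition) : p.countGE (p.pivot + 1) < p.pivot := by
  by_cases hle : p.pivot + 1 ≤ p.parts.card + 1
  · exact not_le.1 (Nat.findGreatest_is_greatest (P := fun e => e - 1 ≤ p.countGE e)
      (Nat.lt_succ_self _) hle)
  · have := p.countGE_le_card (p.pivot + 1)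
    omega

theorem pivot_eq_of (h : d - 1 ≤ p.countGE d) (h' : p.countGE (d + 1) < d) : p.pivot = d := by
  refine le_antisymm ?_ (le_pivot h)
  by_contra! hlt
  have := p.countGE_antitone (show d + 1 ≤ p.pivot by omega)
  have := p.sub_one_le_countGE_pivot
  omega

theorem pivot_le_omegaStat (hcr : crank p < 0) : p.pivot ≤ omegaStat p := by
  rw [crank_neg_iff] at hcr
  by_contra! hlt
  have := p.countGE_antitone (show omegaStat p + 1 ≤ p.pivot by omega)
  have := p.sub_one_le_countGE_pivot
  omega

end Pivot

def splitAtPivot (p : n.Partition) : n.Partition := p.splitIntoOnes p.pivot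

def mergeAtPivot (p : n.Partition) : n.Partition := p.mergeOnes p.pivot

variable {p : n.Partition}

theorem splitAtPivot_spec (hfix : hasFixedPoint p) (hβ : 0 < betaStat p) :
    crank p.splitAtPivot < 0 ∧ betaStat p.splitAtPivot + 1 = betaStat p ∧
      p.splitAtPivot.mergeAtPivot = p := by
  obtain ⟨d, hd, hd'⟩ := (hasFixedPoint_iff p).1 hfix
  have hmem : d ∈ p.parts := by
    rw [← Multiset.count_pos]; have := p.count_add_countGE_succ d; omega
  have h2 : 2 ≤ d := by
    rw [betaStat_eq_countGE] at hβ
    by_contra!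
    have := p.countGE_antitone (show d + 1 ≤ 2 by omega)
    omega
  have hF (j : ℕ) (hj : 2 ≤ j) := countGE_splitIntoOnes hmem hj
  rw [splitAtPivot, pivot_eq_of (by omega) hd']
  refine ⟨?_, ?_, ?_⟩
  · rw [crank_neg_iff, omegaStat_splitIntoOnes hmem (by omega)]
    have hlarge := hF (omegaStat p + d + 1) (by omega)
    rw [if_neg (by omega)] at hlarge
    have := p.countGE_antitone (show d + 1 ≤ omegaStat p + d + 1 by omega)
    omega
  · rw [betaStat_eq_countGE, betaStat_eq_countGE, ← hF 2 le_rfl, if_pos h2]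
  · have hd₁ := hF d h2
    have hd₂ := hF (d + 1) (by omega)
    rw [if_pos le_rfl] at hd₁
    rw [if_neg (by omega)] at hd₂
    rw [mergeAtPivot, pivot_eq_of (d := d) (by omega) (by omega), mergeOnes_splitIntoOnes hmem]

theorem mergeAtPivot_spec (hcr : crank p < 0) (hβ : 0 < betaStat p) :
    hasFixedPoint p.mergeAtPivot ∧ betaStat p.mergeAtPivot = betaStat p + 1 ∧
      p.mergeAtPivot.splitAtPivot = p := by
  unfold mergeAtPivot splitAtPivot
  rw [betaStat_eq_countGE] at hβ
  have h2 : 2 ≤ p.pivot := le_pivot (by omega)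
  have hones : Multiset.replicate p.pivot 1 ≤ p.parts :=
    Multiset.le_count_iff_replicate_le.1 (pivot_le_omegaStat hcr)
  have hF (j : ℕ) (hj : 2 ≤ j) := countGE_mergeOnes (by omega) hones hj
  have hd := hF p.pivot h2
  have hd' := hF (p.pivot + 1) (by omega)
  rw [if_pos le_rfl] at hd
  rw [if_neg (by omega)] at hd'
  have := p.sub_one_le_countGE_pivot
  have := p.countGE_pivot_succ_lt
  refine ⟨(hasFixedPoint_iff _).2 ⟨p.pivot, by omega, by omega⟩, ?_, ?_⟩
  · rw [betaStat_eq_countGE, betaStat_eq_countGE, hF 2 le_rfl, if_pos h2]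
  · rw [pivot_eq_of (p := p.mergeOnes p.pivot) (d := p.pivot) (by omega) (by omega),
      splitIntoOnes_mergeOnes (by omega) hones]

end Nat.Partition

theorem fixed_point_eq_neg_crank_general (n k : ℕ) (hk : 0 < k) :
    {p : Nat.Partition n | hasFixedPoint p ∧ betaStat p = k + 1}.ncard = {p : Nat.Partition n | crank p < 0 ∧ betaStat p = k}.ncard := by
  refine (Set.InvOn.bijOn (f := Nat.Partition.splitAtPivot) (f' := Nat.Partition.mergeAtPivot)
    ⟨?_, ?_⟩ ?_ ?_).ncard_eq
  · rintro p ⟨hfix, hβ⟩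
    exact (Nat.Partition.splitAtPivot_spec hfix (by omega)).2.2
  · rintro q ⟨hcr, hβ⟩
    exact (Nat.Partition.mergeAtPivot_spec hcr (by omega)).2.2
  · rintro p ⟨hfix, hβ⟩
    obtain ⟨hcr, hβ', -⟩ := Nat.Partition.splitAtPivot_spec hfix (by omega)
    exact ⟨hcr, by omega⟩
  · rintro q ⟨hcr, hβ⟩
    obtain ⟨hfix, hβ', -⟩ := Nat.Partition.mergeAtPivot_spec hcr (by omega)
    exact ⟨hfix, by omega⟩

theorem fixed_point_eq_neg_crank (n k : ℕ) (hn : 0 < n) (hk : 0 < k) :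
    {p : Nat.Partition n | hasFixedPoint p ∧ betaStat p = k + 1}.ncard = {p : Nat.Partition n | crank p < 0 ∧ betaStat p = k}.ncard :=
  fixed_point_eq_neg_crank_general n k hk
end

section
/- If a partition λ of a positive integer n has a fixed point i (that is, λ_i = i) and the crank of λ is negative, then the number of parts of λ equal to 1 is at least i. -/
open scoped Classical
/-! If `ω(λ) < i = λ_i`, then the first `i` parts are all at least `λ_i > ω(λ)`, so
`μ(λ) ≥ i > ω(λ)`. But a negative crank forces `ω(λ) > 0` and then `μ(λ) < ω(λ)`. -/

theorem List.succ_le_length_filter_lt_of_pairwise_ge {α : Type*} [Preorder α] [DecidableLT α]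
    {l : List α} (hl : l.Pairwise (· ≥ ·)) {i : ℕ} (hi : i < l.length) {m : α} (hm : m < l[i]) :
    i + 1 ≤ (l.filter (m < ·)).length := by
  have htake : (l.take (i + 1)).filter (m < ·) = l.take (i + 1) := by
    refine List.filter_eq_self.2 fun x hx => ?_
    obtain ⟨j, hj, rfl⟩ := List.mem_take_iff_getElem.1 hx
    have hge : l[i] ≤ l[j] := hl.rel_get_of_le (a := ⟨j, by omega⟩) (b := ⟨i, hi⟩) (by simp; omega)
    exact decide_eq_true (hm.trans_le hge)
  calc i + 1 = ((l.take (i + 1)).filter (m < ·)).length := by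
        rw [htake, List.length_take]; omega
    _ ≤ (l.filter (m < ·)).length := ((List.take_sublist _ l).filter _).length_le

theorem succ_le_card_filter_parts_of_lt_getD_sortedParts {n : ℕ} (p : n.Partition) {m i : ℕ}
    (hm : m < (sortedParts p).getD i 0) : i + 1 ≤ (p.parts.filter (m < ·)).card := by
  have hi : i < (sortedParts p).length := by
    by_contra! h
    rw [List.getD_eq_default _ _ h] at hm
    exact Nat.not_lt_zero m hm
  rw [List.getD_eq_getElem _ _ hi] at hm
  rw [← Multiset.sort_eq p.parts (· ≥ ·), Multiset.filter_coe, Multiset.coe_card]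
  exact List.succ_le_length_filter_lt_of_pairwise_ge (Multiset.pairwise_sort _ _) hi hm

theorem crank_neg_iff {n : ℕ} (p : n.Partition) : crank p < 0 ↔ muStat p < omegaStat p := by
  unfold crank
  split_ifs with h
  · simp [h]
  · omega

theorem fixed_point_neg_crank_many_ones_general (n : ℕ) (p : Nat.Partition n)
    (i : ℕ)
    (hfix : (sortedParts p).getD (i - 1) 0 = i)
    (hcrank : crank p < 0) :
    i ≤ omegaStat p := by
  by_contra! hlt
  have hi : 0 < i := by omega
  have hmu : i ≤ muStat p := by
    have := succ_le_card_filter_parts_of_lt_getD_sortedParts p (m := omegaStat p) (i := i - 1)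
      (by rwa [hfix])
    rwa [Nat.sub_add_cancel hi] at this
  have := (crank_neg_iff p).1 hcrank
  omega

theorem fixed_point_neg_crank_many_ones (n : ℕ) (hn : 0 < n) (p : Nat.Partition n)
    (i : ℕ) (hi : 0 < i) (hil : i ≤ (sortedParts p).length)
    (hfix : (sortedParts p).getD (i - 1) 0 = i)
    (hcrank : crank p < 0) :
    i ≤ omegaStat p :=
  fixed_point_neg_crank_many_ones_general n p i hfix hcrank
end

section
/- If a partition λ of a positive integer n has Durfee square size d, has negative crank, and has no fixed point, then the number of parts of λ equal to 1 is at least d + 1. -/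
open scoped Classical

/-!
A negative crank forces `ω(λ) > 0` and `μ(λ) < ω(λ)`. Let `d` be the Durfee size. Since `λ_d ≥ d`
and `λ_d ≠ d`, the `d` largest parts all exceed `d`; if we had `ω(λ) ≤ d`, they would all be
counted by `μ(λ)`, giving `ω(λ) ≤ d ≤ μ(λ)`.
-/

theorem List.succ_le_countP_lt_of_pairwise_ge {α : Type*} [LinearOrder α] {l : List α}
    (hl : l.Pairwise (· ≥ ·)) {i : ℕ} (hi : i < l.length) {c : α} (hc : c < l[i]) :
    i + 1 ≤ l.countP (fun x => c < x) := by
  have hsplit := List.take_append_drop i l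
  have hhead : l[i] ∈ l.drop i := by
    rw [List.drop_eq_getElem_cons hi]
    exact List.mem_cons_self
  have htake : (l.take i).countP (fun x => c < x) = i := by
    rw [List.countP_eq_length.mpr, List.length_take_of_le hi.le]
    intro a ha
    have hal : a ≥ l[i] := by
      rw [← hsplit, List.pairwise_append] at hl
      exact hl.2.2 a ha _ hhead
    simpa using lt_of_lt_of_le hc hal
  have hdrop : 0 < (l.drop i).countP (fun x => c < x) :=
    List.countP_pos_iff.mpr ⟨_, hhead, by simpa using hc⟩
  rw [← hsplit, List.countP_append, htake]
  omega

section Partition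

variable {n : ℕ} (p : n.Partition)

theorem sortedParts_pairwise_ge : (sortedParts p).Pairwise (· ≥ ·) :=
  Multiset.pairwise_sort _ _

theorem muStat_eq_countP :
    muStat p = (sortedParts p).countP (fun x => omegaStat p < x) := by
  rw [muStat, ← Multiset.countP_eq_card_filter, ← Multiset.sort_eq p.parts (· ≥ ·),
    Multiset.coe_countP]
  rfl

theorem succ_le_muStat {i : ℕ} (hi : i < (sortedParts p).length)
    (h : omegaStat p < (sortedParts p).getD i 0) : i + 1 ≤ muStat p := by
  rw [List.getD_eq_getElem _ _ hi] at h
  rw [muStat_eq_countP]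
  exact List.succ_le_countP_lt_of_pairwise_ge (sortedParts_pairwise_ge p) hi h

theorem omegaStat_pos_of_crank_neg (h : crank p < 0) : 0 < omegaStat p := by
  by_contra h0
  rw [crank, if_pos (by omega)] at h
  omega

theorem muStat_lt_omegaStat_of_crank_neg (h : crank p < 0) : muStat p < omegaStat p := by
  rw [crank, if_neg (omegaStat_pos_of_crank_neg p h).ne'] at h
  omega

theorem durfee_spec (hd : 0 < durfee p) :
    durfee p ≤ (sortedParts p).length ∧ durfee p ≤ (sortedParts p).getD (durfee p - 1) 0 := by
  have hne : {i : ℕ | 0 < i ∧ i ≤ (sortedParts p).length ∧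
      i ≤ (sortedParts p).getD (i - 1) 0}.Nonempty := by
    by_contra hempty
    rw [Set.not_nonempty_iff_eq_empty] at hempty
    rw [durfee, hempty, csSup_empty] at hd
    exact lt_irrefl _ hd
  exact (Nat.sSup_mem hne ⟨_, fun i hi => hi.2.1⟩).2

theorem durfee_lt_sortedParts_of_not_hasFixedPoint (hfix : ¬ hasFixedPoint p)
    (hd : 0 < durfee p) : durfee p < (sortedParts p).getD (durfee p - 1) 0 := by
  obtain ⟨hlen, hle⟩ := durfee_spec p hd
  exact hle.lt_of_ne fun heq => hfix ⟨durfee p, hd, hlen, heq.symm⟩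

end Partition

theorem no_fixed_point_neg_crank_many_ones_general (n : ℕ) (p : Nat.Partition n)
    (hcrank : crank p < 0) (hnofix : ¬ hasFixedPoint p) :
    durfee p + 1 ≤ omegaStat p := by
  by_contra! hle
  have hω := omegaStat_pos_of_crank_neg p hcrank
  have hμ := muStat_lt_omegaStat_of_crank_neg p hcrank
  have hd : 0 < durfee p := by omega
  have hlen := (durfee_spec p hd).1
  have hpart := durfee_lt_sortedParts_of_not_hasFixedPoint p hnofix hd
  have := succ_le_muStat p (i := durfee p - 1) (by omega) (by omega)
  omega

theorem no_fixed_point_neg_crank_many_ones (n : ℕ) (hn : 0 < n) (p : Nat.Partition n)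
    (hcrank : crank p < 0) (hnofix : ¬ hasFixedPoint p) :
    durfee p + 1 ≤ omegaStat p :=
  no_fixed_point_neg_crank_many_ones_general n p hcrank hnofix
end

section
/- There is no bijection φ from the set of partitions of 7 with negative crank to the set of partitions of 7 with positive crank such that for every partition λ with negative crank, β(φ(λ)) = β(λ) + 1 and the crank of φ(λ) equals the negative of the crank of λ. -/
open scoped Classical

/-
The partition `4 + 1 + 1 + 1` has crank `-2` and `β = 1`, so its image would be a partition of
`7` with crank `2` and `β = 2`. None exists: with a part `1` the crank `μ - ω` is below `β`,
and without one the crank is the largest part and `β` the number of parts, so `n ≤ β · crank`,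
i.e. `7 ≤ 4`.
-/

section Crank

variable {n : ℕ} (p : n.Partition)

theorem muStat_le_betaStat (hω : omegaStat p ≠ 0) : muStat p ≤ betaStat p :=
  Multiset.card_le_card <| Multiset.monotone_filter_right _ fun _ _ => by omega

theorem crank_lt_betaStat_of_omegaStat_ne_zero (hω : omegaStat p ≠ 0) :
    crank p < betaStat p := by
  have := muStat_le_betaStat p hω
  rw [crank, if_neg hω]
  omega

theorem betaStat_eq_card_of_omegaStat_eq_zero (hω : omegaStat p = 0) :
    betaStat p = Multiset.card p.parts := by
  rw [betaStat, Multiset.filter_eq_self.2]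
  intro x hx
  have hx1 : x ≠ 1 := fun h => by
    rw [omegaStat, Multiset.count_eq_zero] at hω
    exact hω (h ▸ hx)
  have := p.parts_pos hx
  omega

theorem le_betaStat_mul_crank_of_omegaStat_eq_zero (hω : omegaStat p = 0) :
    (n : ℤ) ≤ betaStat p * crank p := by
  have hsum : n ≤ Multiset.card p.parts • p.parts.sup := by
    calc n = p.parts.sum := p.parts_sum.symm
      _ ≤ _ := Multiset.sum_le_card_nsmul _ _ fun _ => Multiset.le_sup
  rw [crank, if_pos hω, betaStat_eq_card_of_omegaStat_eq_zero p hω]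
  exact_mod_cast hsum

theorem le_betaStat_sq_of_crank_eq_betaStat (h : crank p = betaStat p) :
    n ≤ betaStat p ^ 2 := by
  by_cases hω : omegaStat p = 0
  · have := le_betaStat_mul_crank_of_omegaStat_eq_zero p hω
    rw [h, ← sq] at this
    exact_mod_cast this
  · exact absurd h (crank_lt_betaStat_of_omegaStat_ne_zero p hω).ne

end Crank

def p4111 : Nat.Partition 7 := ⟨{4, 1, 1, 1}, by decide, by decide⟩

theorem crank_p4111 : crank p4111 = -2 := by decide

theorem betaStat_p4111 : betaStat p4111 = 1 := by decide

theorem no_crank_negating_bijection :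
    ¬ ∃ φ : {p : Nat.Partition 7 // crank p < 0} → {p : Nat.Partition 7 // 0 < crank p},
      Function.Bijective φ ∧
      ∀ l : {p : Nat.Partition 7 // crank p < 0},
        betaStat (φ l).1 = betaStat l.1 + 1 ∧ crank (φ l).1 = - crank l.1 := by
  rintro ⟨φ, -, hφ⟩
  let l : {p : Nat.Partition 7 // crank p < 0} := ⟨p4111, by rw [crank_p4111]; norm_num⟩
  obtain ⟨hβ, hcrank⟩ := hφ l
  have hβ2 : betaStat (φ l).1 = 2 := by rw [hβ, show betaStat l.1 = 1 from betaStat_p4111]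
  have hcrank2 : crank (φ l).1 = 2 := by rw [hcrank, show crank l.1 = -2 from crank_p4111]; rfl
  have := le_betaStat_sq_of_crank_eq_betaStat (φ l).1 (by rw [hcrank2, hβ2]; rfl)
  rw [hβ2] at this
  omega
end
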